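/- Let μ be a partition with ℓ ≥ 1 removable corners, of weights R_1,…,R_ℓ, and ℓ+1 addable corners, of weights A_0,…,A_ℓ, and for each i set c_i = (qt·R_i/M)·∏_{j=0}^{ℓ}(1 − A_j/(qt·R_i)) / ∏_{1≤i'≤ℓ, i'≠i}(1 − R_{i'}/R_i) ∈ ℚ(q,t), where M = (1−t)(1−q). Then: (a) Σ_{i=1}^{ℓ} c_i = B_μ; and (b) for every integer k ≥ 1, Σ_{i=1}^{ℓ} c_i·R_i^k = (qt/M) times the coefficient of y^{k+1} in the formal power series ∏_{j=0}^{ℓ}(1 − (A_j/(qt))·y) / ∏_{i=1}^{ℓ}(1 − R_i·y) ∈ ℚ(q,t)[[y]]. (This is the summation formula Σ_{ν→μ} c_{μν}(T_μ/T_ν)^k = (tq/M)·h_{k+1}[D_μ/tq] for the e_1^⊥-Pieri coefficients of modified Macdonald polynomials.) -/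

import Mathlib

open scoped Classical
open PowerSeries

noncomputable section

abbrev K := FractionRing (MvPolynomial (Fin 2) ℚ)

def q : K := algebraMap (MvPolynomial (Fin 2) ℚ) K (MvPolynomial.X 0)
def t : K := algebraMap (MvPolynomial (Fin 2) ℚ) K (MvPolynomial.X 1)

/-- the weight of a cell `(i,j)` (row `i`, column `j`) is `t^i * q^j` -/
def w (c : ℕ × ℕ) : K := t ^ c.1 * q ^ c.2

/-- `B_μ = Σ_{c ∈ μ} w(c)` -/
def Bsum (μ : YoungDiagram) : K := ∑ c ∈ μ.cells, w c

/-- a removable corner: a cell of `μ` whose removal leaves a Young diagram -/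
def IsRemovable (μ : YoungDiagram) (c : ℕ × ℕ) : Prop :=
  c ∈ μ ∧ IsLowerSet (↑(μ.cells.erase c) : Set (ℕ × ℕ))

/-- an addable corner: a cell not in `μ` whose addition gives a Young diagram -/
def IsAddable (μ : YoungDiagram) (c : ℕ × ℕ) : Prop :=
  c ∉ μ ∧ IsLowerSet (↑(insert c μ.cells) : Set (ℕ × ℕ))

/-- the arm of a cell: number of cells of `μ` strictly east of it in its row -/
def arm (μ : YoungDiagram) (c : ℕ × ℕ) : ℕ :=
  (μ.cells.filter fun d => d.1 = c.1 ∧ c.2 < d.2).card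

/-- the leg of a cell: number of cells of `μ` strictly north of it in its column -/
def leg (μ : YoungDiagram) (c : ℕ × ℕ) : ℕ :=
  (μ.cells.filter fun d => d.2 = c.2 ∧ c.1 < d.1).card

/-!
Write `A` for the addable and `R` for the removable corner weights, `ℓ = #R`, and
`N(y) = ∏_A (1 - A y / qt)`, `D(y) = ∏_R (1 - R y)`. Since `deg N ≤ ℓ + 1`, partial fractions give
`N / D = α + β y + Σ_R d_R / (1 - R y)` with `d_R = N(1/R) / ∏_{R' ≠ R} (1 - R'/R)`, and
`c_R = (qt/M) R d_R`. Comparing coefficients of `y^(k+1)` gives (b). Comparing coefficients of `y`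
gives `Σ_R R d_R = Σ R - Σ A / qt - β`, where `β = -1/qt` because `∏ A = (qt)^ℓ ∏ R`; then (a) is
the identity `Σ A = qt Σ R + 1 - M B_μ`. Both corner identities telescope along the rows of `μ`:
the removable corners are the cells `(i, λ_i - 1)` and the addable ones are `(0, λ_0)` and
`(i + 1, λ_(i+1))`, for the rows `i` with `λ_(i+1) < λ_i`.
-/

namespace Polynomial

section LinearFactors

variable {R ι : Type*} [CommRing R] (s : Finset ι) (f : ι → R)

theorem eval_prod_one_sub_C_mul_X (x : R) :
    (∏ i ∈ s, (1 - C (f i) * X)).eval x = ∏ i ∈ s, (1 - f i * x) := by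
  simp [eval_prod]

theorem coeff_zero_prod_one_sub_C_mul_X : (∏ i ∈ s, (1 - C (f i) * X)).coeff 0 = 1 := by
  simp [coeff_zero_eq_eval_zero, eval_prod_one_sub_C_mul_X]

theorem coeff_one_prod_one_sub_C_mul_X [DecidableEq ι] :
    (∏ i ∈ s, (1 - C (f i) * X)).coeff 1 = -∑ i ∈ s, f i := by
  induction s using Finset.induction with
  | empty => simp [coeff_one]
  | insert a s ha ih =>
    rw [Finset.prod_insert ha, Finset.sum_insert ha, sub_mul, one_mul, mul_assoc, coeff_sub,
      coeff_C_mul, coeff_X_mul _ 0, coeff_zero_prod_one_sub_C_mul_X, ih]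
    ring

theorem natDegree_prod_one_sub_C_mul_X_le :
    (∏ i ∈ s, (1 - C (f i) * X)).natDegree ≤ s.card := by
  refine (natDegree_prod_le _ _).trans ?_
  refine (Finset.sum_le_card_nsmul s _ 1 fun i _ => ?_).trans_eq (mul_one _)
  compute_degree

theorem coeff_card_prod_one_sub_C_mul_X :
    (∏ i ∈ s, (1 - C (f i) * X)).coeff s.card = ∏ i ∈ s, -f i := by
  have h := coeff_prod_of_natDegree_le (s := s) (fun i => 1 - C (f i) * X) 1
    fun i _ => by compute_degree
  simpa [coeff_one] using h

theorem coe_prod_one_sub_C_mul_X :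
    ((∏ i ∈ s, (1 - C (f i) * X) : R[X]) : PowerSeries R) =
      ∏ i ∈ s, (1 - PowerSeries.C (f i) * PowerSeries.X) := by
  rw [← coeToPowerSeries.ringHom_apply, map_prod]
  simp

end LinearFactors

theorem eq_of_natDegree_le_of_coeff_eq_of_eval_eq {R : Type*} [CommRing R] [IsDomain R]
    {p p' : R[X]} {n : ℕ} (hp : p.natDegree ≤ n + 1) (hp' : p'.natDegree ≤ n + 1)
    (hcoeff : p.coeff (n + 1) = p'.coeff (n + 1)) (S : Finset R) (hS : S.card = n + 1)
    (heval : ∀ x ∈ S, p.eval x = p'.eval x) : p = p' := by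
  rw [← sub_eq_zero]
  refine eq_zero_of_natDegree_lt_card_of_eval_eq_zero' _ S (by simpa [sub_eq_zero]) ?_
  have h := natDegree_le_pred ((natDegree_sub_le_of_le hp hp').trans_eq (max_self _))
    (by rw [coeff_sub, hcoeff, sub_self])
  omega

section PartialFractions

variable {F ι : Type*} [Field F]

theorem eval_inv_prod_one_sub_C_mul_X_eq_zero_iff (s : Finset ι) (r : ι → F) {a : F}
    (ha : a ≠ 0) : (∏ j ∈ s, (1 - C (r j) * X)).eval a⁻¹ = 0 ↔ ∃ j ∈ s, r j = a := by
  simp [eval_prod_one_sub_C_mul_X, Finset.prod_eq_zero_iff, sub_eq_zero, eq_comm (a := (1 : F)),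
    mul_inv_eq_one₀ ha]

variable [DecidableEq ι] {s : Finset ι} {r : ι → F}

theorem eval_inv_prod_erase_eq_zero_iff (hr0 : ∀ i ∈ s, r i ≠ 0) (hr : Set.InjOn r s)
    {i k : ι} (hk : k ∈ s) :
    (∏ j ∈ s.erase i, (1 - C (r j) * X)).eval (r k)⁻¹ = 0 ↔ i ≠ k := by
  rw [eval_inv_prod_one_sub_C_mul_X_eq_zero_iff _ _ (hr0 k hk)]
  constructor
  · rintro ⟨j, hj, hjk⟩ rfl
    exact (Finset.mem_erase.1 hj).1 (hr (Finset.mem_of_mem_erase hj) hk hjk)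
  · exact fun hik => ⟨k, Finset.mem_erase.2 ⟨hik.symm, hk⟩, rfl⟩

theorem eval_inv_sum_C_mul_prod_erase (hr0 : ∀ i ∈ s, r i ≠ 0) (hr : Set.InjOn r s)
    (d : ι → F) {k : ι} (hk : k ∈ s) :
    (∑ i ∈ s, C (d i) * ∏ j ∈ s.erase i, (1 - C (r j) * X)).eval (r k)⁻¹ =
      d k * (∏ j ∈ s.erase k, (1 - C (r j) * X)).eval (r k)⁻¹ := by
  rw [eval_finsetSum, Finset.sum_eq_single_of_mem k hk fun i _ hik => by
    rw [eval_mul, (eval_inv_prod_erase_eq_zero_iff hr0 hr hk).2 hik, mul_zero], eval_mul, eval_C]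

def partialFractionCoeff (N : F[X]) (s : Finset ι) (r : ι → F) (i : ι) : F :=
  N.eval (r i)⁻¹ / (∏ j ∈ s.erase i, (1 - C (r j) * X)).eval (r i)⁻¹

variable {N : F[X]}

theorem eq_partialFraction (hr0 : ∀ i ∈ s, r i ≠ 0) (hr : Set.InjOn r s)
    (hN : N.natDegree ≤ s.card + 1) :
    N = (C (N.coeff 0 - ∑ i ∈ s, partialFractionCoeff N s r i) +
          C (N.coeff (s.card + 1) / ∏ i ∈ s, -r i) * X) * ∏ i ∈ s, (1 - C (r i) * X) +
        ∑ i ∈ s, C (partialFractionCoeff N s r i) * ∏ j ∈ s.erase i, (1 - C (r j) * X) := by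
  set d := partialFractionCoeff N s r with hd
  set α := N.coeff 0 - ∑ i ∈ s, d i
  set β := N.coeff (s.card + 1) / ∏ i ∈ s, -r i
  have hD := natDegree_prod_one_sub_C_mul_X_le s r
  have hE : ∀ i ∈ s, (∏ j ∈ s.erase i, (1 - C (r j) * X)).natDegree < s.card := fun i hi =>
    (natDegree_prod_one_sub_C_mul_X_le _ r).trans_lt (Finset.card_erase_lt_of_mem hi)
  refine eq_of_natDegree_le_of_coeff_eq_of_eval_eq hN ?_ ?_
    (insert 0 (s.image fun i => (r i)⁻¹)) ?_ ?_
  · exact natDegree_add_le_of_degree_le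
      ((natDegree_mul_le_of_le (by compute_degree) hD).trans_eq (add_comm 1 _))
      (natDegree_sum_le_of_forall_le _ _ fun i hi =>
        (natDegree_C_mul_le _ _).trans (hE i hi).le |>.trans (Nat.le_succ _))
  · rw [coeff_add, add_mul, coeff_add, coeff_C_mul, mul_assoc, coeff_C_mul, coeff_X_mul,
      coeff_card_prod_one_sub_C_mul_X,
      coeff_eq_zero_of_natDegree_lt (p := ∏ i ∈ s, (1 - C (r i) * X)) (Nat.lt_succ_of_le hD),
      finsetSum_coeff, Finset.sum_eq_zero fun i hi => by
        rw [coeff_C_mul, coeff_eq_zero_of_natDegree_lt (by have := hE i hi; omega), mul_zero],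
      div_mul_cancel₀ _ (Finset.prod_ne_zero_iff.2 fun i hi => neg_ne_zero.2 (hr0 i hi))]
    ring
  · rw [Finset.card_insert_of_notMem (by simpa using hr0),
      Finset.card_image_of_injOn fun i hi j hj h => hr hi hj (inv_injective h)]
  simp only [Finset.mem_insert, Finset.mem_image]
  rintro x (rfl | ⟨k, hk, rfl⟩)
  · simp [α, eval_finsetSum, eval_prod_one_sub_C_mul_X, ← coeff_zero_eq_eval_zero]
  rw [eval_add, eval_mul,
    (eval_inv_prod_one_sub_C_mul_X_eq_zero_iff s r (hr0 k hk)).2 ⟨k, hk, rfl⟩, mul_zero,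
    zero_add, eval_inv_sum_C_mul_prod_erase hr0 hr d hk, hd, partialFractionCoeff,
    div_mul_cancel₀ _ (mt (eval_inv_prod_erase_eq_zero_iff hr0 hr hk).1 (by simp))]

theorem sum_partialFractionCoeff_mul (hr0 : ∀ i ∈ s, r i ≠ 0) (hr : Set.InjOn r s)
    (hN : N.natDegree ≤ s.card + 1) :
    ∑ i ∈ s, partialFractionCoeff N s r i * r i =
      N.coeff 1 + N.coeff 0 * ∑ i ∈ s, r i - N.coeff (s.card + 1) / ∏ i ∈ s, -r i := by
  have h := congrArg (coeff · 1) (eq_partialFraction hr0 hr hN)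
  simp only [coeff_add, add_mul, coeff_C_mul, mul_assoc, coeff_X_mul _ 0, finsetSum_coeff,
    coeff_zero_prod_one_sub_C_mul_X, coeff_one_prod_one_sub_C_mul_X] at h
  have hE : ∑ i ∈ s, partialFractionCoeff N s r i * -∑ j ∈ s.erase i, r j =
      ∑ i ∈ s, partialFractionCoeff N s r i * r i -
        (∑ i ∈ s, partialFractionCoeff N s r i) * ∑ j ∈ s, r j := by
    rw [Finset.sum_mul, ← Finset.sum_sub_distrib]
    exact Finset.sum_congr rfl fun i hi => by rw [Finset.sum_erase_eq_sub hi]; ring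
  rw [hE] at h
  linear_combination -h

theorem coeff_mul_inv_prod_one_sub_C_mul_X (hr0 : ∀ i ∈ s, r i ≠ 0) (hr : Set.InjOn r s)
    (hN : N.natDegree ≤ s.card + 1) {m : ℕ} (hm : 2 ≤ m) :
    PowerSeries.coeff m ((N : PowerSeries F) *
        (∏ i ∈ s, (1 - PowerSeries.C (r i) * PowerSeries.X))⁻¹) =
      ∑ i ∈ s, partialFractionCoeff N s r i * r i ^ m := by
  set d := partialFractionCoeff N s r
  set α := N.coeff 0 - ∑ i ∈ s, d i
  set β := N.coeff (s.card + 1) / ∏ i ∈ s, -r i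
  set geom := fun a : F => PowerSeries.rescale a (PowerSeries.mk 1)
  have hgeom : ∀ a, geom a * (1 - PowerSeries.C a * PowerSeries.X) = 1 := fun a => by
    simpa [geom, PowerSeries.rescale_X] using
      congrArg (PowerSeries.rescale a) (PowerSeries.mk_one_mul_one_sub_eq_one (S := F))
  have hexp : (N : PowerSeries F) * (∏ i ∈ s, (1 - PowerSeries.C (r i) * PowerSeries.X))⁻¹ =
      PowerSeries.C α + PowerSeries.C β * PowerSeries.X +
        ∑ i ∈ s, PowerSeries.C (d i) * geom (r i) := by
    have hD : PowerSeries.constantCoeff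
        (∏ i ∈ s, (1 - PowerSeries.C (r i) * PowerSeries.X)) ≠ 0 := by
      simp [map_prod]
    rw [eq_comm, PowerSeries.eq_mul_inv_iff_mul_eq hD]
    conv_rhs => rw [eq_partialFraction hr0 hr hN, ← coeToPowerSeries.ringHom_apply]
    simp only [map_add, map_mul, map_sum, coeToPowerSeries.ringHom_apply, coe_C, coe_X,
      coe_prod_one_sub_C_mul_X, add_mul, Finset.sum_mul]
    congr 1
    refine Finset.sum_congr rfl fun i hi => ?_
    rw [← Finset.mul_prod_erase s _ hi, mul_assoc, ← mul_assoc (geom _), hgeom, one_mul]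
  rw [hexp]
  simp [PowerSeries.coeff_X, geom, PowerSeries.coeff_rescale, PowerSeries.coeff_C,
    show m ≠ 0 by omega, show m ≠ 1 by omega]

end PartialFractions

end Polynomial

theorem w_eq_algebraMap_monomial (c : ℕ × ℕ) :
    w c = algebraMap (MvPolynomial (Fin 2) ℚ) K
      (MvPolynomial.monomial (Finsupp.single 1 c.1 + Finsupp.single 0 c.2) 1) := by
  simp [w, q, t, ← map_pow, ← map_mul, MvPolynomial.X_pow_eq_monomial, MvPolynomial.monomial_mul]

theorem w_ne_zero (c : ℕ × ℕ) : w c ≠ 0 := by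
  rw [w_eq_algebraMap_monomial, map_ne_zero_iff _ (IsFractionRing.injective _ K)]
  simp

theorem w_injective : Function.Injective w := by
  intro c c' h
  rw [w_eq_algebraMap_monomial, w_eq_algebraMap_monomial] at h
  have h := MvPolynomial.monomial_left_injective one_ne_zero (IsFractionRing.injective _ K h)
  have h0 := DFunLike.congr_fun h 0
  have h1 := DFunLike.congr_fun h 1
  simp at h0 h1
  exact Prod.ext h1 h0

theorem q_ne_zero : q ≠ 0 := by simpa [w] using w_ne_zero (0, 1)

theorem t_ne_zero : t ≠ 0 := by simpa [w] using w_ne_zero (1, 0)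

theorem one_sub_t_mul_one_sub_q_ne_zero : (1 - t) * (1 - q) ≠ 0 := by
  refine mul_ne_zero (sub_ne_zero.2 fun h => ?_) (sub_ne_zero.2 fun h => ?_)
  · simpa using w_injective (a₁ := (0, 0)) (a₂ := (1, 0)) (by simpa [w] using h)
  · simpa using w_injective (a₁ := (0, 0)) (a₂ := (0, 1)) (by simpa [w] using h)

namespace YoungDiagram

variable (μ : YoungDiagram)

def cornerRows : Finset ℕ :=
  (Finset.range (μ.colLen 0)).filter fun i => μ.rowLen (i + 1) < μ.rowLen i

def removableCorners : Finset (ℕ × ℕ) :=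
  μ.cornerRows.image fun i => (i, μ.rowLen i - 1)

def addableCorners : Finset (ℕ × ℕ) :=
  insert (0, μ.rowLen 0) (μ.cornerRows.image fun i => (i + 1, μ.rowLen (i + 1)))

variable {μ}

theorem mem_iff_lt_colLen_zero_and_lt_rowLen {i j : ℕ} :
    (i, j) ∈ μ ↔ i < μ.colLen 0 ∧ j < μ.rowLen i := by
  rw [← mem_iff_lt_colLen, ← mem_iff_lt_rowLen]
  exact ⟨fun h => ⟨μ.up_left_mem le_rfl (Nat.zero_le j) h, h⟩, And.right⟩

theorem rowLen_colLen_zero : μ.rowLen (μ.colLen 0) = 0 := by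
  by_contra h
  exact (mem_iff_lt_colLen.1 (mem_iff_lt_rowLen.2 (Nat.pos_of_ne_zero h))).false

theorem mem_cornerRows {i : ℕ} : i ∈ μ.cornerRows ↔ μ.rowLen (i + 1) < μ.rowLen i := by
  refine ⟨fun h => (Finset.mem_filter.1 h).2, fun h => Finset.mem_filter.2 ⟨?_, h⟩⟩
  exact Finset.mem_range.2
    (mem_iff_lt_colLen_zero_and_lt_rowLen.1 (mem_iff_lt_rowLen.2 (Nat.sub_one_lt_of_lt h))).1

theorem isRemovable_iff {i j : ℕ} :
    IsRemovable μ (i, j) ↔ (i, j) ∈ μ ∧ (i + 1, j) ∉ μ ∧ (i, j + 1) ∉ μ := by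
  rw [IsRemovable, Finset.coe_erase]
  refine and_congr_right fun hij => ⟨fun h => ⟨fun h' => ?_, fun h' => ?_⟩, fun ⟨h1, h2⟩ => ?_⟩
  · exact (h (Prod.mk_le_mk.2 ⟨Nat.le_succ i, le_rfl⟩) (by simpa using h')).2 rfl
  · exact (h (Prod.mk_le_mk.2 ⟨le_rfl, Nat.le_succ j⟩) (by simpa using h')).2 rfl
  refine μ.isLowerSet.erase fun ⟨a, b⟩ hab hle => ?_
  obtain ⟨ha, hb⟩ := Prod.mk_le_mk.1 hle
  rcases ha.eq_or_lt with rfl | ha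
  · rcases hb.eq_or_lt with rfl | hb
    · rfl
    · exact (h2 (μ.up_left_mem le_rfl hb hab)).elim
  · exact (h1 (μ.up_left_mem ha hb hab)).elim

theorem isAddable_iff {i j : ℕ} :
    IsAddable μ (i, j) ↔ j = μ.rowLen i ∧ ∀ k, i = k + 1 → j < μ.rowLen k := by
  rw [IsAddable, Finset.coe_insert, mem_iff_lt_rowLen, not_lt]
  constructor
  · rintro ⟨hj, h⟩
    have hpred : ∀ a b, (a, b) ≤ (i, j) → (a, b) ≠ (i, j) → b < μ.rowLen a := fun a b hle hne =>
      mem_iff_lt_rowLen.1 ((h hle (Set.mem_insert _ _)).resolve_left hne)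
    refine ⟨?_, fun k hk => hpred k j (Prod.mk_le_mk.2 ⟨by omega, le_rfl⟩) (by simp [hk])⟩
    cases j with
    | zero => omega
    | succ j => have := hpred i j (Prod.mk_le_mk.2 ⟨le_rfl, Nat.le_succ j⟩) (by simp); omega
  · rintro ⟨rfl, h⟩
    refine ⟨le_rfl, fun x y hyx hx => ?_⟩
    rcases hx with rfl | hx
    · obtain ⟨a, b⟩ := y
      obtain ⟨ha, hb⟩ := Prod.mk_le_mk.1 hyx
      by_cases hy : (a, b) = (i, μ.rowLen i)
      · exact Or.inl hy
      refine Or.inr (mem_iff_lt_rowLen.2 ?_)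
      rcases ha.eq_or_lt with rfl | ha
      · exact lt_of_le_of_ne hb (by simpa using hy)
      · obtain ⟨k, rfl⟩ := Nat.exists_eq_add_of_lt ha
        exact (hb.trans_lt (h _ rfl)).trans_le (μ.rowLen_anti a _ (by omega))
    · exact Or.inr (μ.isLowerSet hyx hx)

theorem isRemovable_iff_mem_removableCorners {c : ℕ × ℕ} :
    IsRemovable μ c ↔ c ∈ μ.removableCorners := by
  obtain ⟨i, j⟩ := c
  simp only [isRemovable_iff, mem_iff_lt_rowLen, removableCorners, Finset.mem_image,
    mem_cornerRows, Prod.mk.injEq]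
  have := μ.rowLen_anti i (i + 1) (Nat.le_succ i)
  constructor
  · rintro ⟨h1, h2, h3⟩
    exact ⟨i, by omega, rfl, by omega⟩
  · rintro ⟨k, hk, rfl, rfl⟩
    omega

theorem isAddable_iff_mem_addableCorners {c : ℕ × ℕ} :
    IsAddable μ c ↔ c ∈ μ.addableCorners := by
  obtain ⟨i, j⟩ := c
  simp only [isAddable_iff, addableCorners, Finset.mem_insert, Finset.mem_image,
    mem_cornerRows, Prod.mk.injEq]
  cases i with
  | zero => simp
  | succ i =>
    constructor
    · rintro ⟨rfl, h⟩
      exact Or.inr ⟨i, h i rfl, rfl, rfl⟩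
    · rintro (⟨h, -⟩ | ⟨k, hk, hki, rfl⟩)
      · omega
      · obtain rfl : k = i := by omega
        exact ⟨rfl, fun k' hk' => by rwa [← Nat.succ_injective hk']⟩

variable (μ)

@[to_additive]
theorem prod_removableCorners {M : Type*} [CommMonoid M] (g : ℕ × ℕ → M) :
    ∏ c ∈ μ.removableCorners, g c = ∏ i ∈ μ.cornerRows, g (i, μ.rowLen i - 1) :=
  Finset.prod_image fun _ _ _ _ h => (Prod.ext_iff.1 h).1

@[to_additive]
theorem prod_addableCorners {M : Type*} [CommMonoid M] (g : ℕ × ℕ → M) :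
    ∏ c ∈ μ.addableCorners, g c =
      g (0, μ.rowLen 0) * ∏ i ∈ μ.cornerRows, g (i + 1, μ.rowLen (i + 1)) := by
  rw [addableCorners, Finset.prod_insert (by simp),
    Finset.prod_image fun _ _ _ _ h => Nat.succ_injective (Prod.ext_iff.1 h).1]

theorem card_addableCorners : μ.addableCorners.card = μ.removableCorners.card + 1 := by
  simp only [Finset.card_eq_sum_ones, sum_addableCorners, sum_removableCorners, add_comm]

theorem Bsum_eq_sum_rows :
    Bsum μ = ∑ i ∈ Finset.range (μ.colLen 0), t ^ i * ∑ j ∈ Finset.range (μ.rowLen i), q ^ j := by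
  rw [Bsum, Finset.sum_finset_product _ (Finset.range (μ.colLen 0))
    (fun i => Finset.range (μ.rowLen i)) fun c => by
      simp [← mem_iff_lt_colLen_zero_and_lt_rowLen]]
  simp [w, Finset.mul_sum]

theorem cornerRows_subset : μ.cornerRows ⊆ Finset.range (μ.colLen 0) :=
  Finset.filter_subset _ _

theorem q_mul_t_mul_w_removableCorner {i : ℕ} (hi : i ∈ μ.cornerRows) :
    q * t * w (i, μ.rowLen i - 1) = t * w (i, μ.rowLen i) := by
  have h : μ.rowLen i ≠ 0 := by have := mem_cornerRows.1 hi; omega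
  simp only [w, ← pow_sub_one_mul h q]
  ring

theorem w_succ_of_notMem_cornerRows {i : ℕ} (hi : i ∉ μ.cornerRows) :
    w (i + 1, μ.rowLen (i + 1)) = t * w (i, μ.rowLen i) := by
  have h : μ.rowLen (i + 1) = μ.rowLen i :=
    (μ.rowLen_anti i (i + 1) (Nat.le_succ i)).antisymm (not_lt.1 (mt mem_cornerRows.2 hi))
  simp only [w, h]
  ring

theorem sum_w_addableCorners :
    ∑ c ∈ μ.addableCorners, w c =
      q * t * ∑ c ∈ μ.removableCorners, w c + 1 - (1 - t) * (1 - q) * Bsum μ := by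
  have hB : (1 - t) * (1 - q) * Bsum μ =
      ∑ i ∈ Finset.range (μ.colLen 0), (t ^ i - t ^ (i + 1)) * (1 - q ^ μ.rowLen i) := by
    rw [Bsum_eq_sum_rows, Finset.mul_sum]
    refine Finset.sum_congr rfl fun i _ => ?_
    linear_combination (1 - t) * t ^ i * mul_neg_geom_sum q (μ.rowLen i)
  have hcorner : ∑ i ∈ μ.cornerRows, w (i + 1, μ.rowLen (i + 1)) -
      q * t * ∑ i ∈ μ.cornerRows, w (i, μ.rowLen i - 1) =
      ∑ i ∈ Finset.range (μ.colLen 0), (w (i + 1, μ.rowLen (i + 1)) - t * w (i, μ.rowLen i)) := by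
    rw [Finset.mul_sum, ← Finset.sum_sub_distrib,
      Finset.sum_congr rfl fun i hi => by rw [q_mul_t_mul_w_removableCorner μ hi]]
    exact Finset.sum_subset μ.cornerRows_subset fun i _ hi => by
      rw [w_succ_of_notMem_cornerRows μ hi, sub_self]
  have htel :
      ∑ i ∈ Finset.range (μ.colLen 0), (w (i + 1, μ.rowLen (i + 1)) - t * w (i, μ.rowLen i)) +
      ∑ i ∈ Finset.range (μ.colLen 0), (t ^ i - t ^ (i + 1)) * (1 - q ^ μ.rowLen i) =
      1 - w (0, μ.rowLen 0) := by
    rw [← Finset.sum_add_distrib, Finset.sum_congr rfl fun i _ =>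
      show _ = t ^ i * (1 - q ^ μ.rowLen i) - t ^ (i + 1) * (1 - q ^ μ.rowLen (i + 1)) by
        simp only [w]; ring,
      Finset.sum_range_sub', rowLen_colLen_zero]
    simp [w]
  rw [sum_addableCorners, sum_removableCorners, hB]
  linear_combination hcorner + htel

theorem prod_w_addableCorners :
    ∏ c ∈ μ.addableCorners, w c =
      (q * t) ^ μ.removableCorners.card * ∏ c ∈ μ.removableCorners, w c := by
  have hcorner : (∏ i ∈ μ.cornerRows, w (i + 1, μ.rowLen (i + 1))) /
      ∏ i ∈ μ.cornerRows, q * t * w (i, μ.rowLen i - 1) =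
      (∏ i ∈ Finset.range (μ.colLen 0), w (i + 1, μ.rowLen (i + 1))) /
        (t ^ μ.colLen 0 * ∏ i ∈ Finset.range (μ.colLen 0), w (i, μ.rowLen i)) := by
    rw [← Finset.prod_div_distrib,
      Finset.prod_congr rfl fun i hi => by rw [q_mul_t_mul_w_removableCorner μ hi],
      Finset.prod_subset (f := fun i => w (i + 1, μ.rowLen (i + 1)) / (t * w (i, μ.rowLen i)))
        μ.cornerRows_subset fun i _ hi => by
          rw [w_succ_of_notMem_cornerRows μ hi, div_self (mul_ne_zero t_ne_zero (w_ne_zero _))],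
      Finset.prod_div_distrib, Finset.prod_mul_distrib, Finset.prod_const, Finset.card_range]
  have htel : w (0, μ.rowLen 0) * ∏ i ∈ Finset.range (μ.colLen 0), w (i + 1, μ.rowLen (i + 1)) =
      t ^ μ.colLen 0 * ∏ i ∈ Finset.range (μ.colLen 0), w (i, μ.rowLen i) := by
    have h := (Finset.prod_range_succ' (fun i => w (i, μ.rowLen i)) (μ.colLen 0)).symm.trans
      (Finset.prod_range_succ _ _)
    rw [rowLen_colLen_zero] at h
    simpa [w, mul_comm] using h
  set Q := ∏ i ∈ μ.cornerRows, q * t * w (i, μ.rowLen i - 1)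
  have hQ : Q ≠ 0 := Finset.prod_ne_zero_iff.2 fun i _ =>
    mul_ne_zero (mul_ne_zero q_ne_zero t_ne_zero) (w_ne_zero _)
  have hR : t ^ μ.colLen 0 * ∏ i ∈ Finset.range (μ.colLen 0), w (i, μ.rowLen i) ≠ 0 :=
    mul_ne_zero (pow_ne_zero _ t_ne_zero) (Finset.prod_ne_zero_iff.2 fun i _ => w_ne_zero _)
  rw [div_eq_div_iff hQ hR] at hcorner
  rw [← Finset.prod_const, ← Finset.prod_mul_distrib, prod_addableCorners, prod_removableCorners]
  exact mul_right_cancel₀ hR (by linear_combination w (0, μ.rowLen 0) * hcorner + Q * htel)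

def addablePoly : Polynomial K :=
  ∏ a ∈ μ.addableCorners, (1 - Polynomial.C (w a / (q * t)) * Polynomial.X)

theorem natDegree_addablePoly_le : μ.addablePoly.natDegree ≤ μ.removableCorners.card + 1 :=
  (Polynomial.natDegree_prod_one_sub_C_mul_X_le _ _).trans_eq μ.card_addableCorners

theorem sum_partialFractionCoeff_addablePoly_mul :
    ∑ r ∈ μ.removableCorners, μ.addablePoly.partialFractionCoeff μ.removableCorners w r * w r =
      (1 - t) * (1 - q) * Bsum μ / (q * t) := by
  have hq := q_ne_zero
  have ht := t_ne_zero
  have hR : ∏ r ∈ μ.removableCorners, w r ≠ 0 := Finset.prod_ne_zero_iff.2 fun r _ => w_ne_zero r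
  have hβ : (∏ a ∈ μ.addableCorners, -(w a / (q * t))) / ∏ r ∈ μ.removableCorners, -w r =
      -(q * t)⁻¹ := by
    rw [Finset.prod_neg, Finset.prod_neg, Finset.prod_div_distrib, Finset.prod_const,
      μ.prod_w_addableCorners, μ.card_addableCorners]
    field_simp
    ring
  rw [Polynomial.sum_partialFractionCoeff_mul (fun r _ => w_ne_zero r) w_injective.injOn
      μ.natDegree_addablePoly_le, addablePoly,
    Polynomial.coeff_zero_prod_one_sub_C_mul_X, Polynomial.coeff_one_prod_one_sub_C_mul_X,
    ← μ.card_addableCorners, Polynomial.coeff_card_prod_one_sub_C_mul_X, hβ, ← Finset.sum_div,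
    μ.sum_w_addableCorners]
  field_simp
  ring

end YoungDiagram

theorem stmt_6_general (μ : YoungDiagram) (Rem Add : Finset (ℕ × ℕ))
    (hRem : ∀ x, x ∈ Rem ↔ IsRemovable μ x)
    (hAdd : ∀ x, x ∈ Add ↔ IsAddable μ x)
    (M : K) (hM : M = (1 - t) * (1 - q))
    (c : (ℕ × ℕ) → K)
    (hc : ∀ r ∈ Rem, c r =
      q * t * w r / M * (∏ a ∈ Add, (1 - w a / (q * t * w r))) /
        ∏ r' ∈ Rem.erase r, (1 - w r' / w r)) :
    (∑ r ∈ Rem, c r) = Bsum μ ∧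
    ∀ k : ℕ, 1 ≤ k →
      (∑ r ∈ Rem, c r * w r ^ k) =
        q * t / M *
          coeff (R := K) (k + 1)
            ((∏ a ∈ Add, (1 - C (R := K) (w a / (q * t)) * X)) *
              (∏ r ∈ Rem, (1 - C (R := K) (w r) * X))⁻¹) := by
  obtain rfl : Rem = μ.removableCorners :=
    Finset.ext fun x => (hRem x).trans YoungDiagram.isRemovable_iff_mem_removableCorners
  obtain rfl : Add = μ.addableCorners :=
    Finset.ext fun x => (hAdd x).trans YoungDiagram.isAddable_iff_mem_addableCorners
  have hc' : ∀ r ∈ μ.removableCorners,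
      c r = q * t / M * (μ.addablePoly.partialFractionCoeff μ.removableCorners w r * w r) := by
    intro r hr
    rw [hc r hr, Polynomial.partialFractionCoeff, YoungDiagram.addablePoly,
      Polynomial.eval_prod_one_sub_C_mul_X, Polynomial.eval_prod_one_sub_C_mul_X]
    simp only [div_eq_mul_inv, mul_inv, mul_assoc]
    ring
  refine ⟨?_, fun k hk => ?_⟩
  · rw [Finset.sum_congr rfl hc', ← Finset.mul_sum,
      μ.sum_partialFractionCoeff_addablePoly_mul, ← hM]
    field_simp [q_ne_zero, t_ne_zero, hM ▸ one_sub_t_mul_one_sub_q_ne_zero]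
  · rw [Finset.sum_congr rfl fun r hr => by rw [hc' r hr, mul_assoc, mul_assoc, ← pow_succ'],
      ← Finset.mul_sum, ← Polynomial.coeff_mul_inv_prod_one_sub_C_mul_X (fun r _ => w_ne_zero r)
        w_injective.injOn μ.natDegree_addablePoly_le (by omega : 2 ≤ k + 1),
      YoungDiagram.addablePoly, Polynomial.coe_prod_one_sub_C_mul_X]

/-- the summation formulas for the corner-weight `e₁^⊥`-Pieri coefficients
`c_{μν}`: they sum to `B_μ`, and with weight `R_i^k` they give `(qt/M)` times the
coefficient of `y^{k+1}` in `∏(1 − (A/qt)·y)/∏(1 − R·y)`. -/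
theorem stmt_6 (μ : YoungDiagram) (Rem Add : Finset (ℕ × ℕ))
    (hRem : ∀ x, x ∈ Rem ↔ IsRemovable μ x)
    (hAdd : ∀ x, x ∈ Add ↔ IsAddable μ x)
    (hne : Rem.Nonempty)
    (M : K) (hM : M = (1 - t) * (1 - q))
    (c : (ℕ × ℕ) → K)
    (hc : ∀ r ∈ Rem, c r =
      q * t * w r / M * (∏ a ∈ Add, (1 - w a / (q * t * w r))) /
        ∏ r' ∈ Rem.erase r, (1 - w r' / w r)) :
    (∑ r ∈ Rem, c r) = Bsum μ ∧
    ∀ k : ℕ, 1 ≤ k →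
      (∑ r ∈ Rem, c r * w r ^ k) =
        q * t / M *
          coeff (R := K) (k + 1)
            ((∏ a ∈ Add, (1 - C (R := K) (w a / (q * t)) * X)) *
              (∏ r ∈ Rem, (1 - C (R := K) (w r) * X))⁻¹) :=
  stmt_6_general μ Rem Add hRem hAdd M hM c hc

end
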